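/- A flow φ on a connected graph Γ is acyclic if and only if there exist positive integers h_e for each edge e such that Σ_{e∈γ} φ(e)·h_e = 0 for every oriented cycle γ of Γ. -/

import Mathlib

/-! A common framework for weighted multigraphs, divisors, flows,
subdivisions, pseudo-divisors and specializations, following
"The moduli space of quasistable spin curves". -/

noncomputable section

/-- A finite weighted multigraph (with a reference orientation of each edge). -/
structure WGraph where
  V : Type
  E : Type
  [fintV : Fintype V]
  [decV : DecidableEq V]
  [fintE : Fintype E]
  [decE : DecidableEq E]
  src : E → V
  tgt : E → V
  w : V → ℕ

namespace WGraph

attribute [instance] WGraph.fintV WGraph.decV WGraph.fintE WGraph.decE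

attribute [local instance] Classical.propDecidable

variable (G : WGraph)

/-- Degree of a vertex (loops count twice). -/
def deg (v : G.V) : ℕ :=
  (Finset.univ.filter (fun e => G.src e = v)).card +
    (Finset.univ.filter (fun e => G.tgt e = v)).card

/-- Degree of a vertex in the edge set `A` (loops count twice). -/
def degIn (A : Finset G.E) (v : G.V) : ℕ :=
  (A.filter (fun e => G.src e = v)).card + (A.filter (fun e => G.tgt e = v)).card

/-- Canonical divisor: `K(v) = 2 w(v) - 2 + deg(v)`. -/
def K (v : G.V) : ℤ := 2 * (G.w v : ℤ) - 2 + (G.deg v : ℤ)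

/-- Canonical polarization of degree `g - 1`. -/
def canPol (v : G.V) : ℚ := (G.K v : ℚ) / 2

/-- Oriented edges: `(e, true)` is `src → tgt`, `(e, false)` is the reverse. -/
abbrev OEdge := G.E × Bool

def osrc (oe : G.OEdge) : G.V := if oe.2 then G.src oe.1 else G.tgt oe.1

def otgt (oe : G.OEdge) : G.V := if oe.2 then G.tgt oe.1 else G.src oe.1

/-- A flow is recorded by its values along the reference orientation;
`flowVal` gives its value on an oriented edge. -/
def flowVal (φ : G.E → ℤ) (oe : G.OEdge) : ℤ := if oe.2 then φ oe.1 else -φ oe.1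

/-- The divisor of a flow: `Div(φ)(v) = ∑_{t(e) = v} φ(e)` over oriented edges. -/
def divOf (φ : G.E → ℤ) (v : G.V) : ℤ :=
  (∑ e : G.E, if G.tgt e = v then φ e else 0) -
    ∑ e : G.E, if G.src e = v then φ e else 0

/-- `e` has exactly one endpoint in `W`. -/
def crossing (W : Finset G.V) (e : G.E) : Prop := (G.src e ∈ W) ≠ (G.tgt e ∈ W)

/-- Number of edges between `W` and its complement. -/
def delta (W : Finset G.V) : ℕ := (Finset.univ.filter (fun e => G.crossing W e)).card

/-- `β_D(W) = deg(D|_W) - μ(W) + δ_W / 2`. -/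
def beta (μ : G.V → ℚ) (D : G.V → ℤ) (W : Finset G.V) : ℚ :=
  (∑ v ∈ W, (D v : ℚ)) - (∑ v ∈ W, μ v) + (G.delta W : ℚ) / 2

def Semistable (μ : G.V → ℚ) (D : G.V → ℤ) : Prop :=
  ∀ W : Finset G.V, W ≠ Finset.univ → 0 ≤ G.beta μ D W

def Stable (μ : G.V → ℚ) (D : G.V → ℤ) : Prop :=
  ∀ W : Finset G.V, W ≠ Finset.univ → W.Nonempty → 0 < G.beta μ D W

def Quasistable (μ : G.V → ℚ) (v₀ : G.V) (D : G.V → ℤ) : Prop :=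
  ∀ W : Finset G.V, W ≠ Finset.univ →
    (0 ≤ G.beta μ D W ∧ (v₀ ∈ W → 0 < G.beta μ D W))

/-- An oriented cycle: a nonempty cyclically closed chain of oriented edges,
with pairwise distinct underlying edges and pairwise distinct vertices. -/
def IsOrientedCycle (c : List G.OEdge) : Prop :=
  c ≠ [] ∧ (c.map Prod.fst).Nodup ∧ (c.map G.osrc).Nodup ∧
    ∀ i : Fin c.length,
      G.otgt (c.get i) = G.osrc (c.get ⟨((i : ℕ) + 1) % c.length, Nat.mod_lt _ i.pos⟩)

/-- A flow is acyclic if there is no oriented cycle on which it is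
nonnegative and somewhere positive. -/
def Acyclic (φ : G.E → ℤ) : Prop :=
  ¬∃ c : List G.OEdge, G.IsOrientedCycle c ∧ (∀ oe ∈ c, 0 ≤ G.flowVal φ oe) ∧
      ∃ oe ∈ c, 0 < G.flowVal φ oe

/-- Adjacency through an edge of `A`. -/
def adjVia (A : Finset G.E) (a b : G.V) : Prop :=
  ∃ e ∈ A, (G.src e = a ∧ G.tgt e = b) ∨ (G.src e = b ∧ G.tgt e = a)

/-- Reachability using only edges of `A`. -/
def ReachVia (A : Finset G.E) : G.V → G.V → Prop := Relation.ReflTransGen (G.adjVia A)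

def Connected : Prop := Nonempty G.V ∧ ∀ u v : G.V, G.ReachVia Finset.univ u v

/-- A cyclic subgraph: a set of edges in which every vertex has even degree. -/
def IsCyclicSubgraph (P : Finset G.E) : Prop := ∀ v : G.V, Even (G.degIn P v)

/-- The characteristic flow of a vertex. -/
def charFlow (v₀ : G.V) (e : G.E) : ℤ :=
  if G.src e = v₀ ∧ G.tgt e ≠ v₀ then 1
  else if G.tgt e = v₀ ∧ G.src e ≠ v₀ then -1 else 0

/-- `Div(v₀)`, the principal divisor attached to a vertex. -/
def DivV (v₀ : G.V) : G.V → ℤ := G.divOf (G.charFlow v₀)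

/-- Principal divisors are integer combinations of the `Div(v)`. -/
def Principal (D : G.V → ℤ) : Prop :=
  ∃ a : G.V → ℤ, ∀ v, D v = ∑ u : G.V, a u * G.DivV u v

/-- Number of connected components of the subgraph with all vertices and
edge set `A`. -/
def numComponents (A : Finset G.E) : ℕ :=
  (Finset.univ.image (fun v => Finset.univ.filter (fun u => G.ReachVia A v u))).card

/-- The subdivision `Γ^S`: one exceptional vertex inserted in each edge of `S`. -/
def subdiv (S : Finset G.E) : WGraph where
  V := G.V ⊕ {e // e ∈ S}
  E := {e // e ∉ S} ⊕ {e // e ∈ S} × Bool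
  src := fun x =>
    match x with
    | .inl e => .inl (G.src e.1)
    | .inr (e, b) => if b then .inr e else .inl (G.src e.1)
  tgt := fun x =>
    match x with
    | .inl e => .inl (G.tgt e.1)
    | .inr (e, b) => if b then .inl (G.tgt e.1) else .inr e
  w := fun v =>
    match v with
    | .inl v => G.w v
    | .inr _ => 0

/-- A pseudo-divisor: value `-1` on every exceptional vertex. -/
def IsPseudoDivisor (S : Finset G.E) (D : (G.subdiv S).V → ℤ) : Prop :=
  ∀ x : {e // e ∈ S}, D (Sum.inr x) = -1

/-- A pseudo-root: `2 D + Div(φ) = K_{Γ^S}` for some acyclic flow `φ` on `Γ^S`. -/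
def IsPseudoRoot (S : Finset G.E) (D : (G.subdiv S).V → ℤ) : Prop :=
  G.IsPseudoDivisor S D ∧
    ∃ φ : (G.subdiv S).E → ℤ, (G.subdiv S).Acyclic φ ∧
      ∀ v, 2 * D v + (G.subdiv S).divOf φ v = (G.subdiv S).K v

/-- Semistability of a pseudo-divisor: semistability on the subdivision with
respect to the (extended) canonical polarization. -/
def IsSemistablePR (S : Finset G.E) (D : (G.subdiv S).V → ℤ) : Prop :=
  (G.subdiv S).Semistable (G.subdiv S).canPol D

/-- `β_{E,D}` for pseudo-divisors, on subsets of the original vertices. -/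
def betaPoly (S : Finset G.E) (D : (G.subdiv S).V → ℤ) (W : Finset G.V) : ℚ :=
  (∑ v ∈ W, (D (Sum.inl v) : ℚ)) -
    (∑ v ∈ W, (G.canPol v + (G.degIn S v : ℚ) / 2)) +
    ((Finset.univ.filter (fun e => e ∉ S ∧ G.crossing W e)).card : ℚ) / 2

/-- Polystability of a pseudo-divisor. -/
def IsPolystable (S : Finset G.E) (D : (G.subdiv S).V → ℤ) : Prop :=
  ∀ W : Finset G.V,
    0 ≤ G.betaPoly S D W ∧ ((∃ e, e ∉ S ∧ G.crossing W e) → 0 < G.betaPoly S D W)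

/-- The divisor `D_P` attached to a cyclic subgraph `P`, on `Γ^{E_P}` with
`E_P = Pᶜ`. -/
def DP (P : Finset G.E) : (G.subdiv Pᶜ).V → ℤ := fun x =>
  match x with
  | .inl v => (G.deg v : ℤ) - (G.degIn P v : ℤ) / 2 - 1 + (G.w v : ℤ)
  | .inr _ => -1

/-- The data of a semistable root-graph together with its acyclic flow. -/
def IsSemistableRootTriple (S : Finset G.E) (D : (G.subdiv S).V → ℤ)
    (φ : (G.subdiv S).E → ℤ) : Prop :=
  G.IsPseudoDivisor S D ∧ G.IsSemistablePR S D ∧ (G.subdiv S).Acyclic φ ∧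
    ∀ v, 2 * D v + (G.subdiv S).divOf φ v = (G.subdiv S).K v

/-- The induced subgraph on a vertex set `W`. -/
def induce (W : Finset G.V) : WGraph where
  V := {v // v ∈ W}
  E := {e // G.src e ∈ W ∧ G.tgt e ∈ W}
  src := fun e => ⟨G.src e.1, e.2.1⟩
  tgt := fun e => ⟨G.tgt e.1, e.2.2⟩
  w := fun v => G.w v.1

/-- Number of edges between `W` and `Wᶜ` incident to `v`. -/
def degCross (W : Finset G.V) (v : G.V) : ℕ :=
  (Finset.univ.filter (fun e => G.src e = v ∧ G.crossing W e)).card +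
    (Finset.univ.filter (fun e => G.tgt e = v ∧ G.crossing W e)).card

/-- A specialization (iterated edge contraction) of weighted graphs. -/
structure Spec (G G' : WGraph) where
  vmap : G.V → G'.V
  emap : G'.E → G.E
  emap_inj : Function.Injective emap
  vmap_surj : Function.Surjective vmap
  src_comm : ∀ e', vmap (G.src (emap e')) = G'.src e'
  tgt_comm : ∀ e', vmap (G.tgt (emap e')) = G'.tgt e'
  contract_eq : ∀ e : G.E, e ∉ Finset.univ.image emap → vmap (G.src e) = vmap (G.tgt e)
  fiber_conn : ∀ u v : G.V, vmap u = vmap v →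
    Relation.ReflTransGen
      (fun a b => ∃ e, e ∉ Finset.univ.image emap ∧
        ((G.src e = a ∧ G.tgt e = b) ∨ (G.src e = b ∧ G.tgt e = a))) u v
  weight_eq : ∀ v' : G'.V,
    (G'.w v' : ℤ) =
      (∑ v ∈ Finset.univ.filter (fun v => vmap v = v'), (G.w v : ℤ)) +
        ((Finset.univ.filter (fun e : G.E =>
            e ∉ Finset.univ.image emap ∧ vmap (G.src e) = v')).card : ℤ) -
        ((Finset.univ.filter (fun v : G.V => vmap v = v')).card : ℤ) + 1

/-- Pushforward of a divisor along a specialization. -/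
def Spec.pushDiv {G G' : WGraph} (σ : Spec G G') (D : G.V → ℤ) : G'.V → ℤ :=
  fun v' => ∑ v ∈ Finset.univ.filter (fun v => σ.vmap v = v'), D v

/-- Pushforward of a polarization along a specialization. -/
def Spec.pushPol {G G' : WGraph} (σ : Spec G G') (μ : G.V → ℚ) : G'.V → ℚ :=
  fun v' => ∑ v ∈ Finset.univ.filter (fun v => σ.vmap v = v'), μ v

/-- The induced map on vertices of subdivisions. -/
def Spec.subdivVmap {G G' : WGraph} (σ : Spec G G') (S : Finset G.E)
    (S' : Finset G'.E) : (G.subdiv S).V → (G'.subdiv S').V := fun x =>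
  match x with
  | .inl v => .inl (σ.vmap v)
  | .inr e =>
    if h : ∃ e' : {e' // e' ∈ S'}, σ.emap e'.1 = e.1 then .inr h.choose
    else .inl (σ.vmap (G.src e.1))

/-- Pushforward of a pseudo-divisor (its divisor part) along a specialization. -/
def Spec.pushSubdivDiv {G G' : WGraph} (σ : Spec G G') (S : Finset G.E)
    (S' : Finset G'.E) (D : (G.subdiv S).V → ℤ) : (G'.subdiv S').V → ℤ := fun y =>
  ∑ x ∈ Finset.univ.filter (fun x => σ.subdivVmap S S' x = y), D x

/-- Extension by zero along the edge injection of a specialization. -/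
def Spec.extendBy {G G' : WGraph} (σ : Spec G G') (x : G'.E → ℝ) : G.E → ℝ :=
  fun e => if h : ∃ e', σ.emap e' = e then x h.choose else 0

/-- Same-graph contraction of subdivisions (for `S ⊆ S'`): the vertex map.
`σb e` selects the endpoint to which the exceptional vertex of a contracted
edge `e ∈ S' \ S` is merged (`true` = target, `false` = source). -/
def contrVmap (S S' : Finset G.E) (σb : G.E → Bool) :
    (G.subdiv S').V → (G.subdiv S).V := fun x =>
  match x with
  | .inl v => .inl v
  | .inr e =>
    if h : e.1 ∈ S then .inr ⟨e.1, h⟩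
    else .inl (if σb e.1 then G.tgt e.1 else G.src e.1)

/-- Same-graph contraction of subdivisions: the edge injection. -/
def contrEmap (S S' : Finset G.E) (hSS : S ⊆ S') (σb : G.E → Bool) :
    (G.subdiv S).E → (G.subdiv S').E := fun x =>
  match x with
  | .inl e =>
    if h : e.1 ∈ S' then .inr (⟨e.1, h⟩, !σb e.1) else .inl ⟨e.1, h⟩
  | .inr eb => .inr (⟨eb.1.1, hSS eb.1.2⟩, eb.2)

/-- Specialization of pseudo-divisors over a fixed graph. -/
def PDSpec (S' : Finset G.E) (D' : (G.subdiv S').V → ℤ) (S : Finset G.E)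
    (D : (G.subdiv S).V → ℤ) : Prop :=
  S ⊆ S' ∧ ∃ σb : G.E → Bool,
    ∀ v, D v = ∑ x ∈ Finset.univ.filter (fun x => G.contrVmap S S' σb x = v), D' x

/-- Specialization of semistable root-graphs over a fixed graph: a
specialization of pseudo-divisors pushing the acyclic flow forward. -/
def RootSpec (S' : Finset G.E) (D' : (G.subdiv S').V → ℤ) (S : Finset G.E)
    (D : (G.subdiv S).V → ℤ) : Prop :=
  ∃ hSS : S ⊆ S', ∃ σb : G.E → Bool,
    (∀ v, D v = ∑ x ∈ Finset.univ.filter (fun x => G.contrVmap S S' σb x = v), D' x) ∧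
    ∀ φ' φ : _, (G.subdiv S').Acyclic φ' →
      (∀ v, 2 * D' v + (G.subdiv S').divOf φ' v = (G.subdiv S').K v) →
      (G.subdiv S).Acyclic φ →
      (∀ v, 2 * D v + (G.subdiv S).divOf φ v = (G.subdiv S).K v) →
      ∀ x, φ x = φ' (G.contrEmap S S' hSS σb x)

/-- Underlying edge of `Γ` of an edge of `Γ^S`. -/
def underE (S : Finset G.E) : (G.subdiv S).E → G.E := fun x =>
  match x with
  | .inl e => e.1
  | .inr eb => eb.1.1

/-- A specialization of triples `(Γ, E, D) ≥ (Γ', E', D')`. -/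
structure TripleSpec (G : WGraph) (S : Finset G.E) (D : (G.subdiv S).V → ℤ)
    (G' : WGraph) (S' : Finset G'.E) (D' : (G'.subdiv S').V → ℤ) where
  base : Spec G G'
  sub : Spec (G.subdiv S) (G'.subdiv S')
  vcomm : ∀ v : G.V, sub.vmap (Sum.inl v) = Sum.inl (base.vmap v)
  ecomm : ∀ x : (G'.subdiv S').E, G.underE S (sub.emap x) = base.emap (G'.underE S' x)
  edges_sub : ∀ e' ∈ S', base.emap e' ∈ S
  push_eq : ∀ y, D' y = ∑ x ∈ Finset.univ.filter (fun x => sub.vmap x = y), D x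

/-- A triple specialization is a specialization of root-graphs when it pushes
the (unique) acyclic flows forward. -/
def TripleSpec.IsRootSpec {G : WGraph} {S : Finset G.E} {D : (G.subdiv S).V → ℤ}
    {G' : WGraph} {S' : Finset G'.E} {D' : (G'.subdiv S').V → ℤ}
    (T : TripleSpec G S D G' S' D') : Prop :=
  ∀ φ φ', (G.subdiv S).Acyclic φ →
    (∀ v, 2 * D v + (G.subdiv S).divOf φ v = (G.subdiv S).K v) →
    (G'.subdiv S').Acyclic φ' →
    (∀ v, 2 * D' v + (G'.subdiv S').divOf φ' v = (G'.subdiv S').K v) →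
    ∀ x, φ' x = φ (T.sub.emap x)

/-- The cone `λ` attached to a flow: nonnegative orthant cut by the cycle
equations. -/
def lambdaSet (φ : G.E → ℤ) : Set (G.E → ℝ) :=
  {x | (∀ e, 0 ≤ x e) ∧ ∀ c : List G.OEdge, G.IsOrientedCycle c →
      ((c.map (fun oe => (G.flowVal φ oe : ℝ) * x oe.1)).sum) = 0}

/-- Its relative interior (intersection with the positive orthant). -/
def lambdaInt (φ : G.E → ℤ) : Set (G.E → ℝ) :=
  {x | (∀ e, 0 < x e) ∧ ∀ c : List G.OEdge, G.IsOrientedCycle c →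
      ((c.map (fun oe => (G.flowVal φ oe : ℝ) * x oe.1)).sum) = 0}

/-- Faces of a cone (supporting-hyperplane definition). -/
def IsFaceOf (F C : Set (G.E → ℝ)) : Prop :=
  F = C ∨ ∃ l : (G.E → ℝ) →ₗ[ℝ] ℝ, (∀ x ∈ C, 0 ≤ l x) ∧ F = C ∩ {x | l x = 0}

/-- Facets: faces of codimension one. -/
def IsFacetOf (F C : Set (G.E → ℝ)) : Prop :=
  G.IsFaceOf F C ∧
    Module.finrank ℝ (Submodule.span ℝ F) + 1 = Module.finrank ℝ (Submodule.span ℝ C)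

/-- The vector `u_V` spanning the subspace `L_E`. -/
def uVec (S : Finset G.E) (W : Finset G.V) : (G.subdiv S).E → ℝ := fun x =>
  match x with
  | .inl _ => 0
  | .inr eb =>
    if G.crossing W eb.1.1 then
      (if (if eb.2 then G.tgt eb.1.1 else G.src eb.1.1) ∈ W then 1 else -1)
    else 0

/-- The subspace `L_E ⊆ ℝ^{E(Γ^S)}`. -/
def LSub (S : Finset G.E) : Submodule ℝ ((G.subdiv S).E → ℝ) :=
  Submodule.span ℝ {u | ∃ W : Finset G.V, (∀ e, G.crossing W e → e ∈ S) ∧ u = G.uVec S W}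

/-- The diagonal map `δ_E : ℝ^{E(Γ)} → ℝ^{E(Γ^S)}`. -/
def deltaMap (S : Finset G.E) (x : G.E → ℝ) : (G.subdiv S).E → ℝ := fun e' =>
  match e' with
  | .inl e => x e.1
  | .inr eb => x eb.1.1

/-- One step of a `φ`-path avoiding the edges of `A`. -/
def phiStep (φ : G.E → ℤ) (A : Finset G.E) (a b : G.V) : Prop :=
  ∃ oe : G.OEdge, oe.1 ∉ A ∧ 0 ≤ G.flowVal φ oe ∧ G.osrc oe = a ∧ G.otgt oe = b

/-- Reachability by `φ`-paths avoiding the edges of `A`. -/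
def PhiReach (φ : G.E → ℤ) (A : Finset G.E) : G.V → G.V → Prop :=
  Relation.ReflTransGen (G.phiStep φ A)

/-- The refinement of `Γ` inserting `m e` vertices in the interior of each
edge `e`. -/
def refine (m : G.E → ℕ) : WGraph where
  V := G.V ⊕ (Σ e : G.E, Fin (m e))
  E := Σ e : G.E, Fin (m e + 1)
  src := fun x =>
    if h : (x.2 : ℕ) = 0 then .inl (G.src x.1)
    else .inr ⟨x.1, ⟨(x.2 : ℕ) - 1, by have := x.2.isLt; omega⟩⟩
  tgt := fun x =>
    if h : (x.2 : ℕ) = m x.1 then .inl (G.tgt x.1)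
    else .inr ⟨x.1, ⟨(x.2 : ℕ), by have := x.2.isLt; omega⟩⟩
  w := fun v =>
    match v with
    | .inl v => G.w v
    | .inr _ => 0

end WGraph

attribute [local instance] Classical.propDecidable

/-! If `φ` is acyclic, let `ψ(v)` be the number of vertices reachable from `v` along oriented
edges on which `φ ≥ 0`. Along an oriented edge with `φ > 0` the count `ψ` drops strictly: a
`φ ≥ 0` path back would, after shortcutting repeated vertices, close up into an oriented cycle
on which `φ ≥ 0` and somewhere `φ > 0`. Across an edge with `φ = 0` it is constant. Hence
`ψ(s e) - ψ(t e)` has the sign of `φ e`, and for `N` a common multiple of the nonzero `φ e` the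
weights `h e = N (ψ(s e) - ψ(t e)) / φ e` are positive and make `φ e · h e` the difference
of the potential `N ψ`, which sums to zero around every cycle. Conversely, on a cycle with
`φ ≥ 0` and somewhere `φ > 0` the weighted sum is positive. -/

namespace WGraph

variable (G : WGraph)

def rev (oe : G.OEdge) : G.OEdge := (oe.1, !oe.2)

def IsWalk : G.V → List G.OEdge → G.V → Prop
  | a, [], b => a = b
  | a, oe :: p, b => G.osrc oe = a ∧ IsWalk (G.otgt oe) p b

def IsPath (a : G.V) (p : List G.OEdge) (b : G.V) : Prop :=
  G.IsWalk a p b ∧ (p.map G.osrc).Nodup ∧ b ∉ p.map G.osrc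

def reachCount (φ : G.E → ℤ) (v : G.V) : ℕ :=
  (Finset.univ.filter (G.PhiReach φ ∅ v)).card

variable {G}

@[simp] lemma otgt_rev (oe : G.OEdge) : G.otgt (G.rev oe) = G.osrc oe := by
  cases oe with | mk e b => cases b <;> rfl

@[simp] lemma flowVal_rev (φ : G.E → ℤ) (oe : G.OEdge) :
    G.flowVal φ (G.rev oe) = -G.flowVal φ oe := by
  cases oe with | mk e b => cases b <;> simp [rev, flowVal]

lemma eq_or_eq_rev_of_fst_eq {oe oe' : G.OEdge} (h : oe'.1 = oe.1) :
    oe' = oe ∨ oe' = G.rev oe := by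
  obtain ⟨e, b⟩ := oe
  obtain ⟨e', b'⟩ := oe'
  cases b <;> cases b' <;> simp_all [rev]

lemma map_otgt_eq_rotate_iff {c : List G.OEdge} :
    c.map G.otgt = (c.map G.osrc).rotate 1 ↔ ∀ i : Fin c.length,
      G.otgt (c.get i) = G.osrc (c.get ⟨((i : ℕ) + 1) % c.length, Nat.mod_lt _ i.pos⟩) := by
  rw [List.ext_get_iff]
  simp [List.getElem_rotate, Fin.forall_iff]

lemma isOrientedCycle_iff {c : List G.OEdge} :
    G.IsOrientedCycle c ↔ c ≠ [] ∧ (c.map Prod.fst).Nodup ∧ (c.map G.osrc).Nodup ∧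
      c.map G.otgt = (c.map G.osrc).rotate 1 := by
  rw [IsOrientedCycle, map_otgt_eq_rotate_iff]

lemma IsOrientedCycle.sum_map_sub_eq_zero {c : List G.OEdge} (hc : G.IsOrientedCycle c)
    (f : G.V → ℤ) : (c.map fun oe => f (G.osrc oe) - f (G.otgt oe)).sum = 0 := by
  have hrot := (isOrientedCycle_iff.1 hc).2.2.2
  have hperm : ((c.map G.otgt).map f).sum = ((c.map G.osrc).map f).sum := by
    rw [hrot, List.map_rotate]
    exact (List.rotate_perm _ _).sum_eq
  rw [← Multiset.sum_coe, ← Multiset.map_coe, Multiset.sum_map_sub]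
  simp only [List.map_map, Function.comp_def] at hperm
  exact sub_eq_zero.2 hperm.symm

namespace IsWalk

variable {a b : G.V} {p : List G.OEdge}

lemma cons_map_otgt (hp : G.IsWalk a p b) : a :: p.map G.otgt = p.map G.osrc ++ [b] := by
  induction p generalizing a with
  | nil => simpa [IsWalk] using hp
  | cons oe p ih =>
    obtain ⟨rfl, hp⟩ := hp
    simp [ih hp]

lemma map_otgt_eq_rotate (hp : G.IsWalk a p a) (hne : p ≠ []) :
    p.map G.otgt = (p.map G.osrc).rotate 1 := by
  obtain ⟨oe, p, rfl⟩ := List.exists_cons_of_ne_nil hne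
  have h := hp.cons_map_otgt
  rw [List.map_cons, List.map_cons, hp.1] at h ⊢
  rw [List.rotate_cons_succ, List.rotate_zero]
  simpa using h

lemma start_mem (hp : G.IsWalk a p b) : a ∈ b :: p.map G.osrc := by
  cases p with
  | nil => exact List.mem_cons.2 (Or.inl hp)
  | cons oe p => exact List.mem_cons_of_mem _ (List.mem_cons.2 (Or.inl hp.1.symm))

lemma otgt_mem (hp : G.IsWalk a p b) {oe : G.OEdge} (hoe : oe ∈ p) :
    G.otgt oe ∈ b :: p.map G.osrc := by
  induction p generalizing a with
  | nil => simp at hoe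
  | cons oe' p ih =>
    obtain ⟨-, hp⟩ := hp
    have hsub : b :: p.map G.osrc ⊆ b :: (oe' :: p).map G.osrc :=
      List.cons_subset_cons b (List.subset_cons_self _ _)
    rcases List.mem_cons.1 hoe with rfl | hoe
    · exact hsub hp.start_mem
    · exact hsub (ih hp hoe)

lemma exists_suffix (hp : G.IsWalk a p b) {v : G.V} (hv : v ∈ p.map G.osrc) :
    ∃ q, q <:+ p ∧ G.IsWalk v q b := by
  induction p generalizing a with
  | nil => simp at hv
  | cons oe p ih =>
    obtain ⟨rfl, hp⟩ := hp
    rcases List.mem_cons.1 hv with rfl | hv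
    · exact ⟨oe :: p, List.suffix_refl _, rfl, hp⟩
    · obtain ⟨q, hq, hqv⟩ := ih hp hv
      exact ⟨q, hq.trans (List.suffix_cons _ _), hqv⟩

end IsWalk

lemma IsPath.nodup_map_fst {a b : G.V} {p : List G.OEdge} (hp : G.IsPath a p b) :
    (p.map Prod.fst).Nodup := by
  induction p generalizing a with
  | nil => exact List.nodup_nil
  | cons oe p ih =>
    obtain ⟨⟨rfl, hw⟩, hnd, hb⟩ := hp
    rw [List.map_cons, List.nodup_cons] at hnd
    rw [List.map_cons, List.mem_cons, not_or] at hb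
    refine List.nodup_cons.2 ⟨fun hmem => ?_, ih ⟨hw, hnd.2, hb.2⟩⟩
    obtain ⟨oe', hoe', hfst⟩ := List.mem_map.1 hmem
    rcases eq_or_eq_rev_of_fst_eq hfst with rfl | rfl
    · exact hnd.1 (List.mem_map_of_mem hoe')
    · have := hw.otgt_mem hoe'
      rw [otgt_rev, List.mem_cons] at this
      exact this.elim (fun h => hb.1 h.symm) hnd.1

lemma PhiReach.exists_isPath {φ : G.E → ℤ} {A : Finset G.E} {a b : G.V}
    (h : G.PhiReach φ A a b) :
    ∃ p, G.IsPath a p b ∧ ∀ oe ∈ p, oe.1 ∉ A ∧ 0 ≤ G.flowVal φ oe := by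
  -- Prepend each step; if its source already lies on the path, cut back to that vertex instead.
  induction h using Relation.ReflTransGen.head_induction_on with
  | refl => exact ⟨[], ⟨rfl, List.nodup_nil, List.not_mem_nil⟩, by simp⟩
  | head hstep _ ih =>
    obtain ⟨oe, hA, hφ, rfl, rfl⟩ := hstep
    obtain ⟨p, ⟨hw, hnd, hb⟩, hp⟩ := ih
    by_cases hend : G.osrc oe = b
    · exact ⟨[], ⟨hend, List.nodup_nil, List.not_mem_nil⟩, by simp⟩
    by_cases hmem : G.osrc oe ∈ p.map G.osrc
    · obtain ⟨q, hq, hqw⟩ := hw.exists_suffix hmem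
      have hsub := hq.sublist.map G.osrc
      exact ⟨q, ⟨hqw, hnd.sublist hsub, fun h => hb (hsub.subset h)⟩,
        fun x hx => hp x (hq.subset hx)⟩
    · refine ⟨oe :: p, ⟨⟨rfl, hw⟩, List.nodup_cons.2 ⟨hmem, hnd⟩, ?_⟩, ?_⟩
      · simpa [List.map_cons, Ne.symm hend] using hb
      · simpa [hA, hφ] using hp

lemma Acyclic.not_phiReach {φ : G.E → ℤ} (hφ : G.Acyclic φ) {oe : G.OEdge}
    (hpos : 0 < G.flowVal φ oe) (A : Finset G.E) :
    ¬ G.PhiReach φ A (G.otgt oe) (G.osrc oe) := by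
  intro hr
  obtain ⟨p, hpath, hp⟩ := hr.exists_isPath
  have ⟨hw, hnd, hb⟩ := hpath
  have hclosed : G.IsWalk (G.osrc oe) (oe :: p) (G.osrc oe) := ⟨rfl, hw⟩
  have hfst : oe.1 ∉ p.map Prod.fst := by
    intro hmem
    obtain ⟨oe', hoe', hfst⟩ := List.mem_map.1 hmem
    rcases eq_or_eq_rev_of_fst_eq hfst with rfl | rfl
    · exact hb (List.mem_map_of_mem hoe')
    · have := (hp _ hoe').2
      rw [flowVal_rev] at this
      omega
  refine hφ ⟨oe :: p, isOrientedCycle_iff.2 ⟨List.cons_ne_nil _ _, ?_, ?_, ?_⟩, ?_,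
    oe, List.mem_cons_self, hpos⟩
  · exact List.nodup_cons.2 ⟨hfst, hpath.nodup_map_fst⟩
  · exact List.nodup_cons.2 ⟨hb, hnd⟩
  · exact hclosed.map_otgt_eq_rotate (List.cons_ne_nil _ _)
  · intro x hx
    rcases List.mem_cons.1 hx with rfl | hx
    · exact hpos.le
    · exact (hp x hx).2

lemma filter_phiReach_otgt_subset {φ : G.E → ℤ} {oe : G.OEdge} (h : 0 ≤ G.flowVal φ oe) :
    Finset.univ.filter (G.PhiReach φ ∅ (G.otgt oe)) ⊆
      Finset.univ.filter (G.PhiReach φ ∅ (G.osrc oe)) := fun v hv => by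
  simp only [Finset.mem_filter, Finset.mem_univ, true_and] at hv ⊢
  exact Relation.ReflTransGen.head ⟨oe, Finset.notMem_empty _, h, rfl, rfl⟩ hv

lemma reachCount_otgt_le {φ : G.E → ℤ} {oe : G.OEdge} (h : 0 ≤ G.flowVal φ oe) :
    G.reachCount φ (G.otgt oe) ≤ G.reachCount φ (G.osrc oe) :=
  Finset.card_le_card (filter_phiReach_otgt_subset h)

lemma Acyclic.reachCount_otgt_lt {φ : G.E → ℤ} (hφ : G.Acyclic φ) {oe : G.OEdge}
    (h : 0 < G.flowVal φ oe) : G.reachCount φ (G.otgt oe) < G.reachCount φ (G.osrc oe) := by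
  refine Finset.card_lt_card ((Finset.ssubset_iff_of_subset
    (filter_phiReach_otgt_subset h.le)).2 ⟨G.osrc oe, ?_, ?_⟩)
  · exact Finset.mem_filter.2 ⟨Finset.mem_univ _, Relation.ReflTransGen.refl⟩
  · simpa using hφ.not_phiReach h ∅

lemma Acyclic.sign_reachCount_sub {φ : G.E → ℤ} (hφ : G.Acyclic φ) (e : G.E) :
    SignType.sign ((G.reachCount φ (G.src e) : ℤ) - G.reachCount φ (G.tgt e)) =
      SignType.sign (φ e) := by
  have hfwd : G.flowVal φ (e, true) = φ e := rfl
  have hbwd : G.flowVal φ (e, false) = -φ e := rfl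
  rcases lt_trichotomy (φ e) 0 with hneg | hzero | hpos
  · have := hφ.reachCount_otgt_lt (oe := (e, false)) (by omega)
    rw [sign_neg hneg, sign_neg (by simpa [osrc, otgt] using this)]
  · have h₁ := reachCount_otgt_le (φ := φ) (oe := (e, true)) (by omega)
    have h₂ := reachCount_otgt_le (φ := φ) (oe := (e, false)) (by omega)
    simp only [osrc, otgt, ↓reduceIte, Bool.false_eq_true] at h₁ h₂
    rw [hzero, sign_zero, sign_eq_zero_iff, sub_eq_zero, le_antisymm h₂ h₁]
  · have := hφ.reachCount_otgt_lt (oe := (e, true)) (by omega)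
    rw [sign_pos hpos, sign_pos (by simpa [osrc, otgt] using this)]

lemma flowVal_mul_eq {φ h : G.E → ℤ} {N : ℤ} {f : G.V → ℤ}
    (hφ : ∀ e, φ e * h e = N * (f (G.src e) - f (G.tgt e))) (oe : G.OEdge) :
    G.flowVal φ oe * h oe.1 = N * (f (G.osrc oe) - f (G.otgt oe)) := by
  obtain ⟨e, _ | _⟩ := oe
  · simp only [flowVal, osrc, otgt, Bool.false_eq_true, ↓reduceIte, neg_mul, hφ]
    ring
  · exact hφ e

end WGraph

lemma exists_pos_mul_eq_mul_of_sign_eq {ι : Type*} [Fintype ι] {φ d : ι → ℤ}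
    (hsign : ∀ i, SignType.sign (d i) = SignType.sign (φ i)) :
    ∃ (N : ℤ) (h : ι → ℤ), (∀ i, 0 < h i) ∧ ∀ i, φ i * h i = N * d i := by
  let N : ℤ := ∏ i, max 1 |φ i|
  have hN : 0 < N := Finset.prod_pos fun i _ => lt_max_of_lt_left one_pos
  have hdvd : ∀ i, φ i ≠ 0 → φ i ∣ N := fun i hi => by
    have := Finset.dvd_prod_of_mem (fun j => max 1 |φ j|) (Finset.mem_univ i)
    rwa [max_eq_right (Int.one_le_abs hi), abs_dvd] at this
  let h : ι → ℤ := fun i => if φ i = 0 then 1 else N * d i / φ i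
  have hmul : ∀ i, φ i * h i = N * d i := fun i => by
    by_cases hi : φ i = 0
    · have : d i = 0 := sign_eq_zero_iff.1 ((hsign i).trans (by simp [hi]))
      simp [h, hi, this]
    · simp only [h, hi, ↓reduceIte]
      exact Int.mul_ediv_cancel' ((hdvd i hi).mul_right _)
  refine ⟨N, h, fun i => ?_, hmul⟩
  by_cases hi : φ i = 0
  · simp [h, hi]
  have hsign_mul : SignType.sign (φ i) * SignType.sign (h i) = SignType.sign (φ i) := by
    rw [← sign_mul, hmul, sign_mul, sign_pos hN, one_mul, hsign]
  have hφi : SignType.sign (φ i) ≠ 0 := sign_ne_zero.2 hi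
  exact sign_eq_one_iff.1 (mul_right_eq_self₀.1 hsign_mul |>.resolve_right hφi)

theorem stmt5_general (G : WGraph) (φ : G.E → ℤ) :
    G.Acyclic φ ↔
      ∃ h : G.E → ℤ, (∀ e, 0 < h e) ∧
        ∀ c : List G.OEdge, G.IsOrientedCycle c →
          ((c.map (fun oe => G.flowVal φ oe * h oe.1)).sum) = 0 := by
  constructor
  · intro hφ
    obtain ⟨N, h, hpos, hmul⟩ := exists_pos_mul_eq_mul_of_sign_eq hφ.sign_reachCount_sub
    refine ⟨h, hpos, fun c hc => ?_⟩
    let ψ : G.V → ℤ := fun v => G.reachCount φ v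
    rw [List.map_congr_left fun oe _ => WGraph.flowVal_mul_eq (f := ψ) hmul oe,
      List.sum_map_mul_left, hc.sum_map_sub_eq_zero ψ, mul_zero]
  · rintro ⟨h, hpos, hzero⟩ ⟨c, hc, hnonneg, oe, hoe, hφoe⟩
    have hsum := List.single_le_sum
      (fun x hx => by
        obtain ⟨oe', hoe', rfl⟩ := List.mem_map.mp hx
        exact mul_nonneg (hnonneg oe' hoe') (hpos oe'.1).le)
      _ (List.mem_map_of_mem (f := fun oe => G.flowVal φ oe * h oe.1) hoe)
    have := mul_pos hφoe (hpos oe.1)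
    linarith [hzero c hc]

/-- A flow `φ` on a connected graph is acyclic iff there are
positive integers `h_e` with `∑_{e ∈ γ} φ(e) h_e = 0` for every oriented
cycle `γ`. -/
theorem stmt5 (G : WGraph) (hconn : G.Connected) (φ : G.E → ℤ) :
    G.Acyclic φ ↔
      ∃ h : G.E → ℤ, (∀ e, 0 < h e) ∧
        ∀ c : List G.OEdge, G.IsOrientedCycle c →
          ((c.map (fun oe => G.flowVal φ oe * h oe.1)).sum) = 0 :=
  stmt5_general G φ
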